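/- Let R be a ring, σ an automorphism of R, δ a σ-derivation, S = R[x; σ, δ], and M a right R-module whose annihilator-type hypothesis holds: every nonzero submodule of M contains a nonzero element a with ann_R(a) a (σ, σ^{-1}, δ)-stable ideal (weak (σ, δ)-compatibility). Then for every good polynomial m ∈ M ⊗_R S there exists r ∈ R such that mr is good and the annihilator of the leading coefficient of mr is (σ, σ^{-1}, δ)-stable. -/
import Mathlib


open MulOpposite

/-- `δ` is a `σ`-derivation of the ring `R`. -/
def IsSigmaDeriv {R : Type} [Ring R] (σ : R ≃+* R) (δ : R → R) : Prop :=
  (∀ a b, δ (a + b) = δ a + δ b) ∧ ∀ a b, δ (a * b) = σ a * δ b + δ a * b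

/-- A presentation of the skew polynomial ring `S = R[x; σ, δ]`: `S` is a ring containing an
image of `R` via `ι`, with an element `x` satisfying `x·r = σ(r)·x + δ(r)`, and `S` is free
as a left `R`-module with basis the powers of `x`. -/
structure SkewPoly (R S : Type) [Ring R] [Ring S] (σ : R ≃+* R) (δ : R → R) : Type where
  ι : R →+* S
  x : S
  comm : ∀ r : R, x * ι r = ι (σ r) * x + ι (δ r)
  basis : Function.Bijective fun c : ℕ →₀ R => c.sum fun i a => ι a * x ^ i

/-- A presentation of the induced right `S`-module `M ⊗_R S` of a right `R`-module `M`
(right modules are encoded as modules over the opposite ring): `N` is a right `S`-module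
containing `M` via `j`, compatibly with the right `R`-actions, and every element of `N` is
uniquely a polynomial `∑ (j mᵢ)·xⁱ` with coefficients in `M`. -/
structure Induced (R S M N : Type) [Ring R] [Ring S] [AddCommGroup M] [Module Rᵐᵒᵖ M]
    [AddCommGroup N] [Module Sᵐᵒᵖ N] {σ : R ≃+* R} {δ : R → R}
    (sp : SkewPoly R S σ δ) : Type where
  j : M →+ N
  j_smul : ∀ (r : R) (m : M), j (op r • m) = op (sp.ι r) • j m
  free : Function.Bijective fun c : ℕ →₀ M => c.sum fun i m => op (sp.x ^ i) • j m

variable {R S M N : Type} [Ring R] [Ring S] [AddCommGroup M] [Module Rᵐᵒᵖ M]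
  [AddCommGroup N] [Module Sᵐᵒᵖ N] {σ : R ≃+* R} {δ : R → R}

/-- The polynomial `∑ (j mᵢ)·xⁱ` in `M ⊗_R S` with coefficient family `c`. -/
def pol (sp : SkewPoly R S σ δ) (im : Induced R S M N sp) (c : ℕ →₀ M) : N :=
  c.sum fun i m => op (sp.x ^ i) • im.j m

/-- `ν ∈ M ⊗_R S` has degree exactly `k`. -/
def DegEq (sp : SkewPoly R S σ δ) (im : Induced R S M N sp) (ν : N) (k : ℕ) : Prop :=
  ∃ c : ℕ →₀ M, pol sp im c = ν ∧ c k ≠ 0 ∧ ∀ i, k < i → c i = 0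

/-- `ν` is a good polynomial of degree `k`: whenever `ν·r ≠ 0` for `r ∈ R`,
`deg (ν·r) = deg ν = k`. -/
def GoodAt (sp : SkewPoly R S σ δ) (im : Induced R S M N sp) (ν : N) (k : ℕ) : Prop :=
  DegEq sp im ν k ∧ ∀ r : R, op (sp.ι r) • ν ≠ 0 → DegEq sp im (op (sp.ι r) • ν) k

/-- `ν` is a good polynomial. -/
def Good (sp : SkewPoly R S σ δ) (im : Induced R S M N sp) (ν : N) : Prop :=
  ∃ k, GoodAt sp im ν k

/-- An ideal-like subset `J ⊆ R` is `(σ, σ⁻¹, δ)`-stable: `σ(J) = J` and `δ(J) ⊆ J`. -/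
def StableSet (σ : R ≃+* R) (δ : R → R) (J : Set R) : Prop :=
  ⇑σ '' J = J ∧ δ '' J ⊆ J

lemma pol_zero (sp : SkewPoly R S σ δ) (im : Induced R S M N sp) : pol sp im 0 = 0 :=
  Finsupp.sum_zero_index

lemma pol_add (sp : SkewPoly R S σ δ) (im : Induced R S M N sp) (a b : ℕ →₀ M) :
    pol sp im (a + b) = pol sp im a + pol sp im b := by
  unfold pol
  exact Finsupp.sum_add_index' (by simp) (by intros; rw [map_add, smul_add])

/-- `pol` as an additive homomorphism. -/
def polHom (sp : SkewPoly R S σ δ) (im : Induced R S M N sp) : (ℕ →₀ M) →+ N where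
  toFun := pol sp im
  map_zero' := pol_zero sp im
  map_add' := pol_add sp im

lemma pol_single (sp : SkewPoly R S σ δ) (im : Induced R S M N sp) (i : ℕ) (m : M) :
    pol sp im (Finsupp.single i m) = op (sp.x ^ i) • im.j m :=
  Finsupp.sum_single_index (by simp)

lemma pol_mapDomain (sp : SkewPoly R S σ δ) (im : Induced R S M N sp) (c : ℕ →₀ M) :
    pol sp im (c.mapDomain Nat.succ) = op sp.x • pol sp im c := by
  unfold pol
  rw [Finsupp.sum_mapDomain_index (by simp) (by intros; rw [map_add, smul_add]),
    Finsupp.smul_sum]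
  refine Finsupp.sum_congr fun i _ => ?_
  rw [smul_smul, ← MulOpposite.op_mul, ← pow_succ]

lemma key (sp : SkewPoly R S σ δ) (im : Induced R S M N sp) (i : ℕ) :
    ∀ (r : R) (m : M), ∃ c : ℕ →₀ M,
      op (sp.x ^ i * sp.ι r) • im.j m = pol sp im c ∧
      c i = op (σ^[i] r) • m ∧ ∀ j, i < j → c j = 0 := by
  induction i with
  | zero =>
    intro r m
    refine ⟨Finsupp.single 0 (op r • m), ?_, by simp, fun j hj =>
      Finsupp.single_eq_of_ne (by omega)⟩
    rw [pol_single, im.j_smul]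
    simp
  | succ i ih =>
    intro r m
    obtain ⟨c₁, h₁, h₁i, h₁hi⟩ := ih (σ r) m
    obtain ⟨c₂, h₂, h₂i, h₂hi⟩ := ih (δ r) m
    refine ⟨c₁.mapDomain Nat.succ + c₂, ?_, ?_, ?_⟩
    · have hx : sp.x ^ (i + 1) * sp.ι r
          = sp.x ^ i * sp.ι (σ r) * sp.x + sp.x ^ i * sp.ι (δ r) := by
        rw [pow_succ, mul_assoc, sp.comm r, mul_add, ← mul_assoc]
      rw [hx, MulOpposite.op_add, add_smul, pol_add, pol_mapDomain,
        ← h₁, ← h₂, MulOpposite.op_mul, mul_smul]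
    · rw [Finsupp.add_apply, h₂hi (i + 1) (by omega),
        show (i + 1) = Nat.succ i from rfl,
        Finsupp.mapDomain_apply Nat.succ_injective, h₁i,
        Function.iterate_succ_apply, add_zero]
    · intro j hj
      rw [Finsupp.add_apply, h₂hi j (by omega)]
      obtain ⟨j', rfl⟩ := Nat.exists_eq_succ_of_ne_zero (by omega : j ≠ 0)
      rw [Finsupp.mapDomain_apply Nat.succ_injective, h₁hi j' (by omega), add_zero]

lemma key2 (sp : SkewPoly R S σ δ) (im : Induced R S M N sp) (k : ℕ) (r : R)
    (c : ℕ →₀ M) (hc : ∀ j, k < j → c j = 0) :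
    ∃ c' : ℕ →₀ M, op (sp.ι r) • pol sp im c = pol sp im c' ∧
      c' k = op (σ^[k] r) • c k ∧ ∀ j, k < j → c' j = 0 := by
  choose f hf hfk hfhi using fun i : ℕ => key sp im i r (c i)
  refine ⟨∑ i ∈ c.support, f i, ?_, ?_, ?_⟩
  · rw [show pol sp im (∑ i ∈ c.support, f i) = polHom sp im (∑ i ∈ c.support, f i) from rfl,
      map_sum]
    unfold pol
    rw [Finsupp.smul_sum]
    refine Finset.sum_congr rfl fun i _ => ?_
    show op (sp.ι r) • op (sp.x ^ i) • im.j (c i) = polHom sp im (f i)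
    rw [smul_smul, ← MulOpposite.op_mul, hf i]
    rfl
  · rw [Finset.sum_apply']
    rw [Finset.sum_eq_single k (fun i hi hne => ?_) (fun hk => ?_)]
    · exact hfk k
    · rcases lt_or_gt_of_ne hne with h | h
      · exact hfhi i k h
      · exact absurd (hc i h) (Finsupp.mem_support_iff.mp hi)
    · rw [hfk k, Finsupp.notMem_support_iff.mp hk, smul_zero]
  · intro j hj
    rw [Finset.sum_apply']
    refine Finset.sum_eq_zero fun i hi => ?_
    have : i ≤ k := by
      by_contra h
      exact absurd (hc i (by omega)) (Finsupp.mem_support_iff.mp hi)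
    exact hfhi i j (by omega)

/-- if `M` satisfies the weak `(σ, δ)`-compatibility condition, then for every
good polynomial `m ∈ M ⊗_R S` there is `r ∈ R` with `m·r` good and the annihilator of the
leading coefficient of `m·r` being `(σ, σ⁻¹, δ)`-stable. -/
theorem stmt12 (sp : SkewPoly R S σ δ) (im : Induced R S M N sp) (hδ : IsSigmaDeriv σ δ)
    (hcompat : ∀ P : Submodule Rᵐᵒᵖ M, P ≠ ⊥ →
      ∃ a ∈ P, a ≠ (0 : M) ∧ StableSet σ δ {t : R | op t • a = 0}) :
    ∀ (ν : N) (k : ℕ), GoodAt sp im ν k →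
      ∃ (r : R) (k' : ℕ) (c' : ℕ →₀ M),
        GoodAt sp im (op (sp.ι r) • ν) k' ∧ pol sp im c' = op (sp.ι r) • ν ∧
        c' k' ≠ 0 ∧ (∀ i, k' < i → c' i = 0) ∧
        StableSet σ δ {t : R | op t • c' k' = 0} := by
  rintro ν k ⟨⟨c, hc, hck, hhigh⟩, hgood⟩
  obtain ⟨a, haP, ha0, hstab⟩ := hcompat (Submodule.span Rᵐᵒᵖ {c k})
    (by rw [Ne, Submodule.span_singleton_eq_bot]; exact hck)
  obtain ⟨t, hta⟩ := Submodule.mem_span_singleton.mp haP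
  set r : R := (⇑σ.symm)^[k] t.unop with hr
  have hsk : σ^[k] r = t.unop :=
    (Function.LeftInverse.iterate σ.apply_symm_apply k) t.unop
  obtain ⟨c', hM, hck', hhigh'⟩ := key2 sp im k r c hhigh
  have hck'a : c' k = a := by
    rw [hck', hsk]
    simpa using hta
  rw [hc] at hM
  refine ⟨r, k, c', ⟨⟨c', hM.symm, ?_, hhigh'⟩, ?_⟩, hM.symm, ?_, hhigh', ?_⟩
  · rw [hck'a]; exact ha0
  · intro r' hne
    have e : op (sp.ι r') • (op (sp.ι r) • ν) = op (sp.ι (r * r')) • ν := by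
      rw [smul_smul, ← MulOpposite.op_mul, ← map_mul]
    rw [e] at hne ⊢
    exact hgood _ hne
  · rw [hck'a]; exact ha0
  · rw [hck'a]; exact hstab
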